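/- (Case $0<p<1$, sequence version, no independence.) Let $0<p<1$ and let $\{X_n, n\ge 1\}$ be a sequence of random vectors in a real separable Hilbert space $\mathcal{H}$ such that $\{\|X_n\|^p\}$ is uniformly integrable in the Cesàro sense, i.e., $\lim_{a\to\infty}\sup_{n\ge 1} n^{-1}\sum_{i=1}^n\mathbb{E}(\|X_i\|^p\mathbf{1}(\|X_i\|^p>a))=0$. Then $n^{-1/p}\max_{1\le k\le n}\|\sum_{i=1}^k X_i\|\to 0$ in $L_p$ as $n\to\infty$. -/

import Mathlib

/-!
Bound the maximal partial sum by `∑ ‖X i‖` and truncate each term at `a ^ (1 / p)`, i.e.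
`‖X i‖ ≤ a ^ (1 / p) + ‖X i‖ 𝟙(‖X i‖ ^ p > a)`. Subadditivity of `t ↦ t ^ p` for `0 < p ≤ 1`
then gives `max_{k ≤ n} ‖S k‖ ^ p ≤ n ^ p a + ∑ ‖X i‖ ^ p 𝟙(‖X i‖ ^ p > a)`, hence
`𝔼 (n ^ (-1 / p) max_{k ≤ n} ‖S k‖) ^ p ≤ a n ^ (p - 1) + n⁻¹ ∑ 𝔼 ‖X i‖ ^ p 𝟙(‖X i‖ ^ p > a)`.
Because the truncation is done before taking `p`-th powers, the bounded part costs only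
`n ^ p a = o(n)`; the tail is uniformly small by Cesàro uniform integrability.
-/

open MeasureTheory Filter Finset

namespace Real

theorem rpow_sum_le_sum_rpow {ι : Type*} {s : Finset ι} {f : ι → ℝ} {p : ℝ}
    (hf : ∀ i ∈ s, 0 ≤ f i) (hp0 : 0 < p) (hp1 : p ≤ 1) :
    (∑ i ∈ s, f i) ^ p ≤ ∑ i ∈ s, f i ^ p :=
  le_sum_of_subadditive_on_pred (· ^ p) (0 ≤ ·) (by simp [zero_rpow hp0.ne'])
    (fun _ _ hx hy => rpow_add_le_add_rpow hx hy hp0.le hp1) (fun _ _ => add_nonneg) f hf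

theorem le_rpow_inv_add_ite {x t p : ℝ} (hx : 0 ≤ x) (ht : 0 ≤ t) (hp : 0 < p) :
    x ≤ t ^ p⁻¹ + if t < x ^ p then x else 0 := by
  split_ifs with h
  · linarith [rpow_nonneg ht p⁻¹]
  · calc x = (x ^ p) ^ p⁻¹ := (rpow_rpow_inv hx hp.ne').symm
      _ ≤ t ^ p⁻¹ := rpow_le_rpow (rpow_nonneg hx p) (not_lt.1 h) (inv_nonneg.2 hp.le)
      _ = t ^ p⁻¹ + 0 := (add_zero _).symm

theorem rpow_sum_le_card_rpow_mul_add_sum_ite {ι : Type*} {s : Finset ι} {f : ι → ℝ}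
    {p t : ℝ} (hf : ∀ i ∈ s, 0 ≤ f i) (ht : 0 ≤ t) (hp0 : 0 < p) (hp1 : p ≤ 1) :
    (∑ i ∈ s, f i) ^ p ≤ (#s : ℝ) ^ p * t + ∑ i ∈ s, if t < f i ^ p then f i ^ p else 0 := by
  set large : ι → ℝ := fun i => if t < f i ^ p then f i else 0
  have hlarge : ∀ i ∈ s, 0 ≤ large i := fun i hi => by
    simp only [large]; split_ifs <;> simp [hf i hi]
  have htrunc : ∑ i ∈ s, f i ≤ #s * t ^ p⁻¹ + ∑ i ∈ s, large i :=
    calc ∑ i ∈ s, f i ≤ ∑ i ∈ s, (t ^ p⁻¹ + large i) :=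
          sum_le_sum fun i hi => le_rpow_inv_add_ite (hf i hi) ht hp0
      _ = #s * t ^ p⁻¹ + ∑ i ∈ s, large i := by
          rw [sum_add_distrib, sum_const, nsmul_eq_mul]
  calc (∑ i ∈ s, f i) ^ p ≤ (#s * t ^ p⁻¹ + ∑ i ∈ s, large i) ^ p :=
        rpow_le_rpow (sum_nonneg hf) htrunc hp0.le
    _ ≤ (#s * t ^ p⁻¹) ^ p + (∑ i ∈ s, large i) ^ p :=
        rpow_add_le_add_rpow (by positivity) (sum_nonneg hlarge) hp0.le hp1
    _ ≤ #s ^ p * t + ∑ i ∈ s, large i ^ p := by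
        rw [mul_rpow (by positivity) (by positivity), rpow_inv_rpow ht hp0.ne']
        gcongr
        exact rpow_sum_le_sum_rpow hlarge hp0 hp1
    _ = #s ^ p * t + ∑ i ∈ s, if t < f i ^ p then f i ^ p else 0 := by
        congr 1
        refine sum_congr rfl fun i _ => ?_
        simp only [large]
        split_ifs <;> simp [zero_rpow hp0.ne']

end Real

section MaxPartialSum

variable {E : Type*} [SeminormedAddCommGroup E]

def maxPartialSumNorm (x : ℕ → E) (n : ℕ) : ℝ :=
  ((Icc 1 n).sup fun k => ‖∑ i ∈ Icc 1 k, x i‖₊ : NNReal)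

theorem maxPartialSumNorm_nonneg (x : ℕ → E) (n : ℕ) : 0 ≤ maxPartialSumNorm x n :=
  NNReal.coe_nonneg _

theorem maxPartialSumNorm_le_sum_norm (x : ℕ → E) (n : ℕ) :
    maxPartialSumNorm x n ≤ ∑ i ∈ Icc 1 n, ‖x i‖ := by
  have : (Icc 1 n).sup (fun k => ‖∑ i ∈ Icc 1 k, x i‖₊) ≤ ∑ i ∈ Icc 1 n, ‖x i‖₊ :=
    Finset.sup_le fun k hk => (nnnorm_sum_le _ _).trans
      (sum_le_sum_of_subset (Icc_subset_Icc_right (mem_Icc.1 hk).2))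
  simpa [maxPartialSumNorm] using NNReal.coe_le_coe.2 this

theorem maxPartialSumNorm_rpow_le (x : ℕ → E) (n : ℕ) {p t : ℝ} (ht : 0 ≤ t) (hp0 : 0 < p)
    (hp1 : p ≤ 1) :
    maxPartialSumNorm x n ^ p ≤
      (n : ℝ) ^ p * t + ∑ i ∈ Icc 1 n, if t < ‖x i‖ ^ p then ‖x i‖ ^ p else 0 :=
  calc maxPartialSumNorm x n ^ p ≤ (∑ i ∈ Icc 1 n, ‖x i‖) ^ p :=
        Real.rpow_le_rpow (maxPartialSumNorm_nonneg x n) (maxPartialSumNorm_le_sum_norm x n)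
          hp0.le
    _ ≤ _ := by
        simpa using Real.rpow_sum_le_card_rpow_mul_add_sum_ite (s := Icc 1 n)
          (fun i _ => norm_nonneg (x i)) ht hp0 hp1

theorem rpow_maxPartialSumNorm_div_nonneg (x : ℕ → E) (n : ℕ) (p : ℝ) :
    0 ≤ (maxPartialSumNorm x n / (n : ℝ) ^ (1 / p)) ^ p :=
  Real.rpow_nonneg (div_nonneg (maxPartialSumNorm_nonneg x n) (by positivity)) p

theorem rpow_maxPartialSumNorm_div_le (x : ℕ → E) {n : ℕ} (hn : 0 < n) {p t : ℝ} (ht : 0 ≤ t)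
    (hp0 : 0 < p) (hp1 : p ≤ 1) :
    (maxPartialSumNorm x n / (n : ℝ) ^ (1 / p)) ^ p ≤
      t * (n : ℝ) ^ (p - 1) + (1 / (n : ℝ)) * ∑ i ∈ Icc 1 n,
        if t < ‖x i‖ ^ p then ‖x i‖ ^ p else 0 := by
  have hn' : (0 : ℝ) < n := Nat.cast_pos.2 hn
  calc (maxPartialSumNorm x n / (n : ℝ) ^ (1 / p)) ^ p = maxPartialSumNorm x n ^ p / n := by
        rw [Real.div_rpow (maxPartialSumNorm_nonneg x n) (by positivity), one_div,
          Real.rpow_inv_rpow hn'.le hp0.ne']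
    _ ≤ ((n : ℝ) ^ p * t + ∑ i ∈ Icc 1 n, if t < ‖x i‖ ^ p then ‖x i‖ ^ p else 0) / n :=
        div_le_div_of_nonneg_right (maxPartialSumNorm_rpow_le x n ht hp0 hp1) hn'.le
    _ = _ := by
        rw [Real.rpow_sub_one hn'.ne']
        ring

end MaxPartialSum

theorem MeasureTheory.Integrable.indicator_setOf_lt {Ω : Type*} [MeasurableSpace Ω]
    {P : Measure Ω} {g : Ω → ℝ} (hg : Integrable g P) (b : ℝ) :
    Integrable (fun ω => {ω | b < g ω}.indicator g ω) P := by
  have hcomp : (fun ω => {ω | b < g ω}.indicator g ω) = (Set.Ioi b).indicator id ∘ g := by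
    ext ω; simp [Set.indicator_apply]
  rw [hcomp]
  exact hg.mono ((measurable_id.indicator measurableSet_Ioi).comp_aemeasurable
    hg.aemeasurable).aestronglyMeasurable
    (ae_of_all _ fun ω => norm_indicator_le_norm_self _ _)

theorem integral_maxPartialSumNorm_div_rpow_le {Ω E : Type*} [MeasurableSpace Ω]
    [SeminormedAddCommGroup E] (P : Measure Ω) [IsProbabilityMeasure P] {p : ℝ} (hp0 : 0 < p)
    (hp1 : p ≤ 1) (X : ℕ → Ω → E) (hint : ∀ i, Integrable (fun ω => ‖X i ω‖ ^ p) P) {a : ℝ}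
    (ha : 0 ≤ a) {n : ℕ} (hn : 0 < n) :
    ∫ ω, (maxPartialSumNorm (X · ω) n / (n : ℝ) ^ (1 / p)) ^ p ∂P ≤
      a * (n : ℝ) ^ (p - 1) + (1 / (n : ℝ)) * ∑ i ∈ Icc 1 n,
        ∫ ω, {ω | a < ‖X i ω‖ ^ p}.indicator (fun ω => ‖X i ω‖ ^ p) ω ∂P := by
  have htail : ∀ i, Integrable
      (fun ω => {ω | a < ‖X i ω‖ ^ p}.indicator (fun ω => ‖X i ω‖ ^ p) ω) P :=
    fun i => (hint i).indicator_setOf_lt a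
  have hbound : Integrable (fun ω => a * (n : ℝ) ^ (p - 1) + (1 / (n : ℝ)) * ∑ i ∈ Icc 1 n,
      {ω | a < ‖X i ω‖ ^ p}.indicator (fun ω => ‖X i ω‖ ^ p) ω) P :=
    (integrable_const _).add ((integrable_finsetSum _ fun i _ => htail i).const_mul _)
  calc _ ≤ ∫ ω, (a * (n : ℝ) ^ (p - 1) + (1 / (n : ℝ)) * ∑ i ∈ Icc 1 n,
        {ω | a < ‖X i ω‖ ^ p}.indicator (fun ω => ‖X i ω‖ ^ p) ω) ∂P :=
        integral_mono_of_nonneg (ae_of_all _ fun ω => rpow_maxPartialSumNorm_div_nonneg _ n p)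
          hbound (ae_of_all _ fun ω => by
            simpa only [Set.indicator_apply, Set.mem_ofPred_eq] using
              rpow_maxPartialSumNorm_div_le (X · ω) hn ha hp0 hp1)
    _ = _ := by
        rw [integral_add (integrable_const _)
            ((integrable_finsetSum _ fun i _ => htail i).const_mul _),
          integral_const_mul (1 / (n : ℝ)), integral_finsetSum _ fun i _ => htail i]
        simp

theorem lp_convergence_maximal_sums_seq_general
    {Ω H : Type*} [MeasurableSpace Ω]
    [NormedAddCommGroup H]
    (P : Measure Ω) [IsProbabilityMeasure P]
    (p : ℝ) (hp0 : 0 < p) (hp1 : p < 1)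
    (X : ℕ → Ω → H)
    (hint : ∀ i, Integrable (fun ω => ‖X i ω‖ ^ p) P)
    -- Cesàro uniform integrability of {‖X_n‖^p}
    (hUI : ∀ ε > (0 : ℝ), ∃ a : ℝ, 0 < a ∧ ∀ b ≥ a, ∀ n : ℕ, 1 ≤ n →
      (1 / (n : ℝ)) * ∑ i ∈ Finset.Icc 1 n,
        ∫ ω, Set.indicator {ω | b < ‖X i ω‖ ^ p} (fun ω => ‖X i ω‖ ^ p) ω ∂P ≤ ε) :
    Tendsto (fun n : ℕ =>
        ∫ ω, ((((Finset.Icc 1 n).sup fun k =>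
            ‖∑ i ∈ Finset.Icc 1 k, X i ω‖₊ : NNReal) : ℝ) /
          (n : ℝ) ^ (1 / p)) ^ p ∂P)
      atTop (nhds 0) := by
  have hdecay : Tendsto (fun n : ℕ => (n : ℝ) ^ (p - 1)) atTop (nhds 0) := by
    simpa [neg_sub, Function.comp_def] using
      (tendsto_rpow_neg_atTop (sub_pos.2 hp1)).comp tendsto_natCast_atTop_atTop
  rw [Metric.tendsto_atTop]
  intro ε hε
  obtain ⟨a, ha, hUIa⟩ := hUI (ε / 2) (half_pos hε)
  obtain ⟨N, hN⟩ := eventually_atTop.1 <|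
    (by simpa using hdecay.const_mul a : Tendsto (fun n : ℕ => a * (n : ℝ) ^ (p - 1)) atTop
      (nhds 0)).eventually (gt_mem_nhds (half_pos hε))
  refine ⟨max N 1, fun n hn => ?_⟩
  have hn1 : 1 ≤ n := le_of_max_le_right hn
  rw [Real.dist_eq, sub_zero, abs_of_nonneg (integral_nonneg fun ω => by positivity)]
  calc _ ≤ _ := integral_maxPartialSumNorm_div_rpow_le P hp0 hp1.le X hint ha.le hn1
    _ < ε / 2 + ε / 2 :=
        add_lt_add_of_lt_of_le (hN n (le_of_max_le_left hn)) (hUIa a le_rfl n hn1)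
    _ = ε := add_halves ε

/-- Sequence version (0<p<1): if {‖X_n‖^p} is Cesàro uniformly integrable then the
normalized maximal partial sums converge to 0 in L_p; no dependence assumption. -/
theorem lp_convergence_maximal_sums_seq
    {Ω H : Type*} [MeasurableSpace Ω]
    [NormedAddCommGroup H] [InnerProductSpace ℝ H] [CompleteSpace H]
    [SecondCountableTopology H] [MeasurableSpace H] [BorelSpace H]
    (P : Measure Ω) [IsProbabilityMeasure P]
    (p : ℝ) (hp0 : 0 < p) (hp1 : p < 1)
    (X : ℕ → Ω → H)
    (hmeas : ∀ i, Measurable (X i))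
    (hint : ∀ i, Integrable (fun ω => ‖X i ω‖ ^ p) P)
    -- Cesàro uniform integrability of {‖X_n‖^p}
    (hUI : ∀ ε > (0 : ℝ), ∃ a : ℝ, 0 < a ∧ ∀ b ≥ a, ∀ n : ℕ, 1 ≤ n →
      (1 / (n : ℝ)) * ∑ i ∈ Finset.Icc 1 n,
        ∫ ω, Set.indicator {ω | b < ‖X i ω‖ ^ p} (fun ω => ‖X i ω‖ ^ p) ω ∂P ≤ ε) :
    Tendsto (fun n : ℕ =>
        ∫ ω, ((((Finset.Icc 1 n).sup fun k =>
            ‖∑ i ∈ Finset.Icc 1 k, X i ω‖₊ : NNReal) : ℝ) /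
          (n : ℝ) ^ (1 / p)) ^ p ∂P)
      atTop (nhds 0) :=
  lp_convergence_maximal_sums_seq_general P p hp0 hp1 X hint hUI
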